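/- Suppose the mean embedding μ ↦ ∫ k(·,x) dμ(x) of finite signed Borel measures into ℱ is injective, and likewise for l into 𝒢. If the covariance operator C_{YX} = ∫ ψ(y) ⊗ φ(x) dθ(x,y) equals zero, then θ = 0, i.e., P_{XY} = P_X ⊗ P_Y. -/

import Mathlib

/-!
Write `θ = θ⁺ - θ⁻` (Jordan decomposition). Applying `C_{YX}` to `f ∈ ℱ` gives
`∫ ⟪φ x, f⟫ ψ y dθ = 0`: this is the mean embedding, under `ψ`, of the signed measure
`B ↦ ∫_{𝒳 × B} ⟪φ x, f⟫ dθ`, which therefore vanishes. Read for all `f`, this says that the mean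
embedding under `φ` of the `𝒳`-marginal of `θ` restricted to `𝒳 × B` vanishes, so that marginal
vanishes too. Hence `θ (A ×ˢ B) = 0` for all measurable rectangles, and `θ = 0`.
-/

open MeasureTheory
open scoped InnerProductSpace ENNReal

/-- Bochner integral of `f` against a finite signed measure `s`, defined via the
Jordan decomposition `s = s⁺ - s⁻`. -/
noncomputable def sInt {X E : Type*} [MeasurableSpace X] [NormedAddCommGroup E]
    [NormedSpace ℝ E] [CompleteSpace E] (s : SignedMeasure X) (f : X → E) : E :=
  (∫ x, f x ∂s.toJordanDecomposition.posPart) - ∫ x, f x ∂s.toJordanDecomposition.negPart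

/-- The rank-one operator `a ⊗ b : f ↦ ⟪b, f⟫ • a`. -/
noncomputable def rank1 {F G : Type*} [NormedAddCommGroup F] [InnerProductSpace ℝ F]
    [NormedAddCommGroup G] [InnerProductSpace ℝ G] (a : G) (b : F) : F →L[ℝ] G :=
  (innerSL ℝ b).smulRight a

open Filter Topology

lemma continuous_of_continuous_inner {X E : Type*} [TopologicalSpace X] [NormedAddCommGroup E]
    [InnerProductSpace ℝ E] {φ : X → E} (h : Continuous fun p : X × X => ⟪φ p.1, φ p.2⟫_ℝ) :
    Continuous φ := by
  refine continuous_iff_continuousAt.2 fun x₀ => tendsto_iff_norm_sub_tendsto_zero.2 ?_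
  have hk : Continuous fun x => ⟪φ x, φ x⟫_ℝ - 2 * ⟪φ x, φ x₀⟫_ℝ + ⟪φ x₀, φ x₀⟫_ℝ :=
    ((h.comp (continuous_id.prodMk continuous_id)).sub
      (continuous_const.mul (h.comp (continuous_id.prodMk continuous_const)))).add continuous_const
  have hsq : Tendsto (fun x => ‖φ x - φ x₀‖ ^ 2) (𝓝 x₀) (𝓝 0) := by
    convert hk.tendsto x₀ using 2
    · rw [norm_sub_sq_real, real_inner_self_eq_norm_sq, real_inner_self_eq_norm_sq]
    · ring
  simpa [Real.sqrt_sq (norm_nonneg _)] using hsq.sqrt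

section rank1

variable {F G : Type*} [NormedAddCommGroup F] [InnerProductSpace ℝ F]
  [NormedAddCommGroup G] [InnerProductSpace ℝ G]

lemma rank1_apply (a : G) (b f : F) : rank1 a b f = ⟪b, f⟫_ℝ • a :=
  rfl

lemma norm_rank1 (a : G) (b : F) : ‖rank1 a b‖ = ‖b‖ * ‖a‖ := by
  rw [rank1, ContinuousLinearMap.norm_smulRight_apply, innerSL_apply_norm]

@[fun_prop]
lemma Continuous.rank1 {α : Type*} [TopologicalSpace α] {a : α → G} {b : α → F}
    (ha : Continuous a) (hb : Continuous b) : Continuous fun x => rank1 (a x) (b x) :=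
  ((ContinuousLinearMap.smulRightL ℝ F G).continuous.comp
    ((innerSL ℝ).continuous.comp hb)).clm_apply ha

end rank1

namespace MeasureTheory

variable {X E : Type*} [MeasurableSpace X] [NormedAddCommGroup E] [NormedSpace ℝ E]

lemma Measure.integral_sub_integral_eq_of_toSignedMeasure_sub_eq {a b c d : Measure X}
    [IsFiniteMeasure a] [IsFiniteMeasure b] [IsFiniteMeasure c] [IsFiniteMeasure d] {f : X → E}
    (ha : Integrable f a) (hb : Integrable f b) (hc : Integrable f c) (hd : Integrable f d)
    (h : a.toSignedMeasure - b.toSignedMeasure = c.toSignedMeasure - d.toSignedMeasure) :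
    ∫ x, f x ∂a - ∫ x, f x ∂b = ∫ x, f x ∂c - ∫ x, f x ∂d := by
  have hadd : a + d = c + b := by
    rw [← toSignedMeasure_eq_toSignedMeasure_iff, toSignedMeasure_add, toSignedMeasure_add]
    exact sub_eq_sub_iff_add_eq_add.mp h
  rw [sub_eq_sub_iff_add_eq_add, ← integral_add_measure ha hd, ← integral_add_measure hc hb, hadd]

lemma integral_withDensity_ofReal_sub_integral_withDensity_ofReal_neg {m : Measure X}
    {h : X → ℝ} (hh : Measurable h) {g : X → E} (hg : AEStronglyMeasurable g m)
    (hhg : Integrable (fun x => h x • g x) m) :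
    ∫ x, g x ∂m.withDensity (fun x => ENNReal.ofReal (h x))
      - ∫ x, g x ∂m.withDensity (fun x => ENNReal.ofReal (-h x)) = ∫ x, h x • g x ∂m := by
  have hpart : ∀ {k : X → ℝ}, Measurable k → (∀ x, |k x| ≤ |h x|) →
      ∫ x, g x ∂m.withDensity (fun x => ENNReal.ofReal (k x)) = ∫ x, max (k x) 0 • g x ∂m ∧
        Integrable (fun x => max (k x) 0 • g x) m := by
    intro k hk hkh
    refine ⟨?_, hhg.mono ((hk.max measurable_const).aestronglyMeasurable.smul hg) ?_⟩
    · simp only [integral_withDensity_eq_integral_toReal_smul hk.ennreal_ofReal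
        (ae_of_all _ fun _ => ENNReal.ofReal_lt_top), ENNReal.toReal_ofReal']
    · refine ae_of_all _ fun x => ?_
      rw [norm_smul, norm_smul, Real.norm_eq_abs, Real.norm_eq_abs]
      refine mul_le_mul_of_nonneg_right ?_ (norm_nonneg _)
      exact ((abs_max_le_max_abs_abs (a := k x) (b := 0)).trans_eq (by simp)).trans (hkh x)
  obtain ⟨hpos, hposi⟩ := hpart hh fun x => le_rfl
  obtain ⟨hneg, hnegi⟩ := hpart (k := fun x => -h x) hh.neg fun x => (abs_neg _).le
  rw [hpos, hneg, ← integral_sub hposi hnegi]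
  simp only [← sub_smul, max_zero_sub_max_neg_zero_eq_self]

end MeasureTheory

section sInt

variable {X Z E : Type*} [MeasurableSpace X] [MeasurableSpace Z]
  [NormedAddCommGroup E] [NormedSpace ℝ E] [CompleteSpace E]

@[simp]
lemma sInt_zero (f : X → E) : sInt (0 : SignedMeasure X) f = 0 := by
  simp [sInt, SignedMeasure.toJordanDecomposition_zero]

lemma sInt_toSignedMeasure_sub (a b : Measure X) [IsFiniteMeasure a] [IsFiniteMeasure b]
    {f : X → E} (hf : StronglyMeasurable f) {C : ℝ} (hfC : ∀ x, ‖f x‖ ≤ C) :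
    sInt (a.toSignedMeasure - b.toSignedMeasure) f = ∫ x, f x ∂a - ∫ x, f x ∂b := by
  have hint : ∀ (μ : Measure X) [IsFiniteMeasure μ], Integrable f μ := fun μ _ =>
    .of_bound hf.aestronglyMeasurable C (ae_of_all _ hfC)
  exact Measure.integral_sub_integral_eq_of_toSignedMeasure_sub_eq (hint _) (hint _) (hint _)
    (hint _) (SignedMeasure.toSignedMeasure_toJordanDecomposition _)

lemma eq_of_integral_eq_of_injective_sInt {f : X → E}
    (hinj : Function.Injective fun s : SignedMeasure X => sInt s f)
    (hf : StronglyMeasurable f) {C : ℝ} (hfC : ∀ x, ‖f x‖ ≤ C)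
    {a b : Measure X} [IsFiniteMeasure a] [IsFiniteMeasure b]
    (h : ∫ x, f x ∂a = ∫ x, f x ∂b) : a = b := by
  rw [← Measure.toSignedMeasure_eq_toSignedMeasure_iff, ← sub_eq_zero]
  apply hinj
  simp only [sInt_toSignedMeasure_sub a b hf hfC, h, sub_self, sInt_zero]

lemma setIntegral_preimage_eq_of_integral_smul_comp_eq {f : X → E}
    (hinj : Function.Injective fun s : SignedMeasure X => sInt s f)
    (hf : StronglyMeasurable f) {C : ℝ} (hfC : ∀ x, ‖f x‖ ≤ C)
    {m₁ m₂ : Measure Z} [IsFiniteMeasure m₁] [IsFiniteMeasure m₂] {π : Z → X} (hπ : Measurable π)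
    {h : Z → ℝ} (hh : Measurable h) {M : ℝ} (hM : ∀ z, |h z| ≤ M)
    (heq : ∫ z, h z • f (π z) ∂m₁ = ∫ z, h z • f (π z) ∂m₂) {A : Set X} (hA : MeasurableSet A) :
    ∫ z in π ⁻¹' A, h z ∂m₁ = ∫ z in π ⁻¹' A, h z ∂m₂ := by
  have hhi : ∀ (m : Measure Z) [IsFiniteMeasure m], Integrable h m := fun m _ =>
    .of_bound hh.aestronglyMeasurable M (ae_of_all _ fun z => (Real.norm_eq_abs _).trans_le (hM z))
  have hfπ : StronglyMeasurable fun z => f (π z) := hf.comp_measurable hπ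
  have hfπi : ∀ (m : Measure Z) [IsFiniteMeasure m], Integrable (fun z => f (π z)) m :=
    fun m _ => .of_bound hfπ.aestronglyMeasurable C (ae_of_all _ fun z => hfC (π z))
  have hhfπi : ∀ (m : Measure Z) [IsFiniteMeasure m], Integrable (fun z => h z • f (π z)) m :=
    fun m _ => (hhi m).smul_bdd C hfπ.aestronglyMeasurable (ae_of_all _ fun z => hfC (π z))
  have hpos : ∀ (m : Measure Z) [IsFiniteMeasure m],
      IsFiniteMeasure (m.withDensity fun z => ENNReal.ofReal (h z)) :=
    fun m _ => isFiniteMeasure_withDensity_ofReal (hhi m).2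
  have hneg : ∀ (m : Measure Z) [IsFiniteMeasure m],
      IsFiniteMeasure (m.withDensity fun z => ENNReal.ofReal (-h z)) :=
    fun m _ => isFiniteMeasure_withDensity_ofReal (hhi m).neg.2
  set μ₁ := m₁.withDensity (fun z => ENNReal.ofReal (h z))
    + m₂.withDensity (fun z => ENNReal.ofReal (-h z))
  set μ₂ := m₂.withDensity (fun z => ENNReal.ofReal (h z))
    + m₁.withDensity (fun z => ENNReal.ofReal (-h z))
  have hsigned :
      μ₁.toSignedMeasure - μ₂.toSignedMeasure = m₁.withDensityᵥ h - m₂.withDensityᵥ h := by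
    rw [withDensityᵥ_eq_withDensity_pos_part_sub_withDensity_neg_part (hhi m₁),
      withDensityᵥ_eq_withDensity_pos_part_sub_withDensity_neg_part (hhi m₂),
      Measure.toSignedMeasure_add, Measure.toSignedMeasure_add]
    abel
  have hmap : μ₁.map π = μ₂.map π := by
    refine eq_of_integral_eq_of_injective_sInt hinj hf hfC ?_
    rw [integral_map hπ.aemeasurable hf.aestronglyMeasurable,
      integral_map hπ.aemeasurable hf.aestronglyMeasurable,
      integral_add_measure (hfπi _) (hfπi _), integral_add_measure (hfπi _) (hfπi _),
      ← sub_eq_sub_iff_add_eq_add,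
      integral_withDensity_ofReal_sub_integral_withDensity_ofReal_neg hh hfπ.aestronglyMeasurable
        (hhfπi m₁),
      integral_withDensity_ofReal_sub_integral_withDensity_ofReal_neg hh hfπ.aestronglyMeasurable
        (hhfπi m₂), heq]
  have hS : MeasurableSet (π ⁻¹' A) := hπ hA
  have hsignedA := congrArg (fun s : SignedMeasure Z => s (π ⁻¹' A)) hsigned
  simp only [_root_.sub_apply, Measure.toSignedMeasure_apply_measurable hS,
    withDensityᵥ_apply (hhi _) hS] at hsignedA
  rw [measureReal_def, measureReal_def, ← Measure.map_apply hπ hA, ← Measure.map_apply hπ hA,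
    hmap, sub_self] at hsignedA
  exact sub_eq_zero.mp hsignedA.symm

lemma eq_of_forall_setIntegral_preimage_snd_eq {f : X → E}
    (hinj : Function.Injective fun s : SignedMeasure X => sInt s f)
    (hf : StronglyMeasurable f) {C : ℝ} (hfC : ∀ x, ‖f x‖ ≤ C)
    {Y : Type*} [MeasurableSpace Y] {p q : Measure (X × Y)} [IsFiniteMeasure p] [IsFiniteMeasure q]
    (h : ∀ B, MeasurableSet B →
      ∫ z in Prod.snd ⁻¹' B, f z.1 ∂p = ∫ z in Prod.snd ⁻¹' B, f z.1 ∂q) :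
    p = q := by
  refine Measure.ext_prod fun {A B} hA hB => ?_
  have hfst : ∀ μ : Measure (X × Y), ∫ x, f x ∂μ.map Prod.fst = ∫ z, f z.1 ∂μ := fun μ =>
    integral_map measurable_fst.aemeasurable hf.aestronglyMeasurable
  have hmap : (p.restrict (Prod.snd ⁻¹' B)).map Prod.fst
      = (q.restrict (Prod.snd ⁻¹' B)).map Prod.fst :=
    eq_of_integral_eq_of_injective_sInt hinj hf hfC (by rw [hfst, hfst]; exact h B hB)
  simpa only [Measure.map_apply measurable_fst hA, Measure.restrict_apply (measurable_fst hA),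
    Set.prod_eq] using congrArg (· A) hmap

end sInt

theorem stmt1_general {𝒳 𝒴 : Type*} [MeasurableSpace 𝒳] [TopologicalSpace 𝒳] [PolishSpace 𝒳] [BorelSpace 𝒳]
    [MeasurableSpace 𝒴] [TopologicalSpace 𝒴] [PolishSpace 𝒴] [BorelSpace 𝒴] {F G : Type*} [NormedAddCommGroup F] [InnerProductSpace ℝ F] [CompleteSpace F]
    [NormedAddCommGroup G] [InnerProductSpace ℝ G] [CompleteSpace G] (φ : 𝒳 → F) (ψ : 𝒴 → G)
    (Bφ Bψ : ℝ) (hφb : ∀ x, ‖φ x‖ ≤ Bφ) (hψb : ∀ y, ‖ψ y‖ ≤ Bψ)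
    (hkc : Continuous (fun p : 𝒳 × 𝒳 => ⟪φ p.1, φ p.2⟫_ℝ))
    (hlc : Continuous (fun p : 𝒴 × 𝒴 => ⟪ψ p.1, ψ p.2⟫_ℝ))
    (hk : Function.Injective (fun μ : SignedMeasure 𝒳 => sInt μ φ)) (hl : Function.Injective (fun ν : SignedMeasure 𝒴 => sInt ν ψ))
    (θ : SignedMeasure (𝒳 × 𝒴))
    (hC : sInt θ (fun p => rank1 (ψ p.2) (φ p.1)) = 0) :
    θ = 0 := by
  have hφc := continuous_of_continuous_inner hkc
  have hψc := continuous_of_continuous_inner hlc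
  set p := θ.toJordanDecomposition.posPart
  set q := θ.toJordanDecomposition.negPart
  have hRi : ∀ (μ : Measure (𝒳 × 𝒴)) [IsFiniteMeasure μ],
      Integrable (fun z => rank1 (ψ z.2) (φ z.1)) μ := fun μ _ =>
    .of_bound (by fun_prop) (Bφ * Bψ) (ae_of_all _ fun z => by
      rw [norm_rank1]
      exact mul_le_mul (hφb _) (hψb _) (norm_nonneg _) ((norm_nonneg _).trans (hφb z.1)))
  have hCf : ∀ f : F, ∫ z, ⟪φ z.1, f⟫_ℝ • ψ z.2 ∂p = ∫ z, ⟪φ z.1, f⟫_ℝ • ψ z.2 ∂q := fun f => by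
    simpa only [ContinuousLinearMap.integral_apply (hRi _), rank1_apply]
      using congrArg (· f) (sub_eq_zero.mp hC)
  have hslice : ∀ f B, MeasurableSet B →
      ∫ z in Prod.snd ⁻¹' B, ⟪φ z.1, f⟫_ℝ ∂p = ∫ z in Prod.snd ⁻¹' B, ⟪φ z.1, f⟫_ℝ ∂q :=
    fun f B hB => setIntegral_preimage_eq_of_integral_smul_comp_eq hl hψc.stronglyMeasurable hψb
      measurable_snd ((hφc.comp continuous_fst).inner continuous_const).measurable
      (fun z => (abs_real_inner_le_norm _ _).trans
        (mul_le_mul_of_nonneg_right (hφb z.1) (norm_nonneg f))) (hCf f) hB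
  have hφi : ∀ (μ : Measure (𝒳 × 𝒴)) [IsFiniteMeasure μ], Integrable (fun z => φ z.1) μ :=
    fun μ _ => .of_bound (by fun_prop) Bφ (ae_of_all _ fun z => hφb z.1)
  have hpq : p = q := eq_of_forall_setIntegral_preimage_snd_eq hk hφc.stronglyMeasurable hφb
    fun B hB => ext_inner_right ℝ fun f => by
      simpa only [← integral_inner (hφi _), real_inner_comm f] using hslice f B hB
  rw [← θ.toSignedMeasure_toJordanDecomposition, JordanDecomposition.toSignedMeasure, sub_eq_zero]
  exact Measure.toSignedMeasure_congr hpq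

theorem stmt1 {𝒳 𝒴 : Type*} [MeasurableSpace 𝒳] [TopologicalSpace 𝒳] [PolishSpace 𝒳] [BorelSpace 𝒳]
    [MeasurableSpace 𝒴] [TopologicalSpace 𝒴] [PolishSpace 𝒴] [BorelSpace 𝒴] {F G : Type*} [NormedAddCommGroup F] [InnerProductSpace ℝ F] [CompleteSpace F] [MeasurableSpace F] [BorelSpace F]
    [NormedAddCommGroup G] [InnerProductSpace ℝ G] [CompleteSpace G] [MeasurableSpace G] [BorelSpace G] (φ : 𝒳 → F) (ψ : 𝒴 → G) (hφm : Measurable φ) (hψm : Measurable ψ)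
    (Bφ Bψ : ℝ) (hφb : ∀ x, ‖φ x‖ ≤ Bφ) (hψb : ∀ y, ‖ψ y‖ ≤ Bψ)
    (hkc : Continuous (fun p : 𝒳 × 𝒳 => ⟪φ p.1, φ p.2⟫_ℝ))
    (hlc : Continuous (fun p : 𝒴 × 𝒴 => ⟪ψ p.1, ψ p.2⟫_ℝ))
    (hk : Function.Injective (fun μ : SignedMeasure 𝒳 => sInt μ φ)) (hl : Function.Injective (fun ν : SignedMeasure 𝒴 => sInt ν ψ))
    (P : Measure (𝒳 × 𝒴)) [IsProbabilityMeasure P]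
    (θ : SignedMeasure (𝒳 × 𝒴))
    (hθ : θ = P.toSignedMeasure
      - ((P.map Prod.fst).prod (P.map Prod.snd)).toSignedMeasure)
    (hC : sInt θ (fun p => rank1 (ψ p.2) (φ p.1)) = 0) :
    θ = 0 :=
  stmt1_general φ ψ Bφ Bψ hφb hψb hkc hlc hk hl θ hC
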